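/- Let (X, Σ, μ) be an atomless finite measure space, E a Banach space, and f, g ∈ L¹(μ, E). For S ∈ Σ with μ(S) > 0 and any δ ∈ (0,1), there exists a sequence Fₙ ∈ Σ with Fₙ ⊆ S, μ(Fₙ) = δ·μ(S) for every n, and ∫_{Fₙ}(f − g) dμ → δ·∫_S (f − g) dμ in norm. -/

import Mathlib

/-!
Approximate `f - g` in `L¹` by a simple function `φ`. By Sierpiński's theorem an atomless finite
measure takes every value in `[0, μ A]` on subsets of `A`, so each level set `S ∩ φ⁻¹' {c}`
contains a subset carrying exactly the fraction `δ` of its measure. Their union `F` satisfies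
`μ F = δ μ S` and `∫_F φ = δ ∫_S φ` exactly, and replacing `φ` by `f - g` costs at most
`(1 + δ) ‖f - g - φ‖₁`.
-/

open MeasureTheory Filter Topology

def MeasureAtomless {X : Type*} [MeasurableSpace X] (μ : Measure X) : Prop :=
  ∀ A : Set X, MeasurableSet A → μ A ≠ 0 →
    ∃ B ⊆ A, MeasurableSet B ∧ 0 < μ B ∧ μ B < μ A

open scoped ENNReal

theorem ENNReal.exists_mem_forall_le_two_mul {α : Type*} {s : Set α} (hs : s.Nonempty)
    {f : α → ℝ≥0∞} (hf : ⨆ a ∈ s, f a ≠ ∞) : ∃ a ∈ s, ∀ b ∈ s, f b ≤ 2 * f a := by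
  set M := ⨆ a ∈ s, f a
  suffices ∃ a ∈ s, M / 2 ≤ f a by
    obtain ⟨a, ha, hMa⟩ := this
    refine ⟨a, ha, fun b hb => ?_⟩
    calc f b ≤ M := le_biSup f hb
      _ = 2 * (M / 2) := (ENNReal.mul_div_cancel two_ne_zero ofNat_ne_top).symm
      _ ≤ 2 * f a := by gcongr
  by_cases hM : M = 0
  · obtain ⟨a, ha⟩ := hs
    exact ⟨a, ha, by simp [hM]⟩
  · obtain ⟨a, ha, hlt⟩ := lt_biSup_iff.mp (ENNReal.half_lt_self hM hf)
    exact ⟨a, ha, hlt.le⟩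

section

variable {X : Type*} [MeasurableSpace X] {μ : Measure X} {A : Set X}

theorem MeasureTheory.exists_nearly_maximal_extension {B : Set X} (htop : μ A ≠ ∞) {r : ℝ≥0∞}
    (hBr : μ B ≤ r) :
    ∃ C, MeasurableSet C ∧ C ⊆ A \ B ∧ μ (B ∪ C) ≤ r ∧
      ∀ D, MeasurableSet D → D ⊆ A \ B → μ (B ∪ D) ≤ r → μ D ≤ 2 * μ C := by
  let admissible : Set (Set X) := {C | MeasurableSet C ∧ C ⊆ A \ B ∧ μ (B ∪ C) ≤ r}
  have h_ne : admissible.Nonempty := ⟨∅, MeasurableSet.empty, Set.empty_subset _, by simpa⟩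
  have h_bdd : ⨆ C ∈ admissible, μ C ≠ ∞ := ne_top_of_le_ne_top htop <|
    iSup₂_le fun C hC => measure_mono (hC.2.1.trans Set.sdiff_subset)
  obtain ⟨C, hC, hC_max⟩ := ENNReal.exists_mem_forall_le_two_mul h_ne h_bdd
  exact ⟨C, hC.1, hC.2.1, hC.2.2, fun D hD hDA hDr => hC_max D ⟨hD, hDA, hDr⟩⟩

theorem MeasureTheory.exists_greedy_exhaustion (htop : μ A ≠ ∞) (r : ℝ≥0∞) :
    ∃ s : ℕ → Set X, Monotone s ∧ (∀ n, MeasurableSet (s n) ∧ s n ⊆ A ∧ μ (s n) ≤ r) ∧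
      ∀ n D, MeasurableSet D → D ⊆ A \ s n → μ (s n ∪ D) ≤ r →
        2 * μ (s n) + μ D ≤ 2 * μ (s (n + 1)) := by
  choose! next h_next using fun B (hBr : μ B ≤ r) => exists_nearly_maximal_extension htop hBr
  let s : ℕ → Set X := fun n => Nat.rec ∅ (fun _ B => B ∪ next B) n
  have h_s : ∀ n, MeasurableSet (s n) ∧ s n ⊆ A ∧ μ (s n) ≤ r := by
    intro n
    induction n with
    | zero => exact ⟨MeasurableSet.empty, Set.empty_subset _, by simp [s]⟩
    | succ n ih =>
      obtain ⟨hC, hCA, hCr, -⟩ := h_next _ ih.2.2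
      exact ⟨ih.1.union hC, Set.union_subset ih.2.1 (hCA.trans Set.sdiff_subset), hCr⟩
  refine ⟨s, monotone_nat_of_le_succ fun n => Set.subset_union_left, h_s,
    fun n D hD hDA hDr => ?_⟩
  obtain ⟨hC, hCA, -, hC_max⟩ := h_next _ (h_s n).2.2
  have h_union : μ (s (n + 1)) = μ (s n) + μ (next (s n)) :=
    measure_union (Set.disjoint_of_subset_right hCA Set.disjoint_sdiff_right) hC
  rw [h_union, mul_add]
  gcongr
  exact hC_max D hD hDA hDr

theorem MeasureAtomless.exists_subset_measure_ne_zero_two_mul_le (hμ : MeasureAtomless μ)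
    (hA : MeasurableSet A) (h0 : μ A ≠ 0) :
    ∃ B ⊆ A, MeasurableSet B ∧ μ B ≠ 0 ∧ 2 * μ B ≤ μ A := by
  obtain ⟨B, hBA, hB, hB0, hBA_lt⟩ := hμ A hA h0
  have h_add : μ B + μ (A \ B) = μ A := by
    rw [measure_add_sdiff hB.nullMeasurableSet, Set.union_eq_self_of_subset_left hBA]
  have h_diff0 : μ (A \ B) ≠ 0 := fun h => hBA_lt.ne (measure_eq_measure_of_null_sdiff hBA h)
  rcases le_total (μ B) (μ (A \ B)) with hle | hle
  · exact ⟨B, hBA, hB, hB0.ne', by rw [two_mul, ← h_add]; gcongr⟩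
  · exact ⟨A \ B, Set.sdiff_subset, hA.diff hB, h_diff0, by rw [two_mul, ← h_add]; gcongr⟩

theorem MeasureAtomless.exists_subset_measure_ne_zero_lt (hμ : MeasureAtomless μ)
    (hA : MeasurableSet A) (h0 : μ A ≠ 0) (htop : μ A ≠ ∞) {ε : ℝ≥0∞} (hε : ε ≠ 0) :
    ∃ B ⊆ A, MeasurableSet B ∧ μ B ≠ 0 ∧ μ B < ε := by
  have h_halve : ∀ n : ℕ, ∃ B ⊆ A, MeasurableSet B ∧ μ B ≠ 0 ∧ 2 ^ n * μ B ≤ μ A := by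
    intro n
    induction n with
    | zero => exact ⟨A, subset_rfl, hA, h0, by simp⟩
    | succ n ih =>
      obtain ⟨B, hBA, hB, hB0, hBle⟩ := ih
      obtain ⟨C, hCB, hC, hC0, hCle⟩ := hμ.exists_subset_measure_ne_zero_two_mul_le hB hB0
      refine ⟨C, hCB.trans hBA, hC, hC0, ?_⟩
      calc 2 ^ (n + 1) * μ C = 2 ^ n * (2 * μ C) := by ring
        _ ≤ 2 ^ n * μ B := by gcongr
        _ ≤ μ A := hBle
  obtain ⟨n, hn⟩ := ENNReal.exists_nat_mul_gt hε htop
  obtain ⟨B, hBA, hB, hB0, hBle⟩ := h_halve n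
  refine ⟨B, hBA, hB, hB0, (ENNReal.mul_lt_mul_iff_right (a := 2 ^ n) (by simp) (by simp)).mp ?_⟩
  calc 2 ^ n * μ B ≤ μ A := hBle
    _ < n * ε := hn
    _ ≤ 2 ^ n * ε := by gcongr; exact_mod_cast (Nat.lt_two_pow_self).le

/- If the union `B` of the greedy exhaustion fell short of `r`, a set `D ⊆ A \ B` of small
positive measure would stay admissible forever, so every step would add at least `μ D / 2`. -/
theorem MeasureAtomless.exists_subset_measure_eq (hμ : MeasureAtomless μ) (hA : MeasurableSet A)
    (htop : μ A ≠ ∞) {r : ℝ≥0∞} (hr : r ≤ μ A) : ∃ B ⊆ A, MeasurableSet B ∧ μ B = r := by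
  obtain ⟨s, h_mono, h_s, h_greedy⟩ := exists_greedy_exhaustion htop r
  set B := ⋃ n, s n
  have hBA : B ⊆ A := Set.iUnion_subset fun n => (h_s n).2.1
  have hB : MeasurableSet B := MeasurableSet.iUnion fun n => (h_s n).1
  have h_le : μ B ≤ r := by
    rw [h_mono.measure_iUnion]
    exact iSup_le fun n => (h_s n).2.2
  refine ⟨B, hBA, hB, h_le.antisymm (not_lt.mp fun h_lt => ?_)⟩
  have h_rest0 : μ (A \ B) ≠ 0 := fun h =>
    (h_lt.trans_le hr).ne (measure_eq_measure_of_null_sdiff hBA h)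
  obtain ⟨D, hDA, hD, hD0, hDlt⟩ := hμ.exists_subset_measure_ne_zero_lt (hA.diff hB) h_rest0
    (ne_top_of_le_ne_top htop (measure_mono Set.sdiff_subset)) (tsub_pos_of_lt h_lt).ne'
  have h_grow : ∀ n : ℕ, n * μ D ≤ 2 * μ (s n) := by
    intro n
    induction n with
    | zero => simp
    | succ n ih =>
      refine le_trans ?_ (h_greedy n D hD
        (hDA.trans (Set.sdiff_subset_sdiff_right (Set.subset_iUnion s n))) ?_)
      · push_cast
        rw [add_one_mul]
        gcongr
      · calc μ (s n ∪ D) ≤ μ (s n) + μ D := measure_union_le _ _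
          _ ≤ μ B + (r - μ B) := add_le_add (measure_mono (Set.subset_iUnion s n)) hDlt.le
          _ = r := add_tsub_cancel_of_le h_le
  have h2r : 2 * r ≠ ∞ := ENNReal.mul_ne_top ENNReal.ofNat_ne_top (ne_top_of_le_ne_top htop hr)
  obtain ⟨n, hn⟩ := ENNReal.exists_nat_mul_gt hD0 h2r
  exact (hn.trans_le ((h_grow n).trans (by gcongr; exact (h_s n).2.2))).false

end

namespace MeasureTheory.SimpleFunc

variable {X β E : Type*} [MeasurableSpace X] {μ : Measure X} [NormedAddCommGroup E]
  [NormedSpace ℝ E]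

theorem measure_eq_sum_measure_preimage_inter (φ : SimpleFunc X β) (F : Set X) :
    μ F = ∑ c ∈ φ.range, μ (φ ⁻¹' {c} ∩ F) := by
  simpa [Measure.restrict_apply (φ.measurableSet_preimage _)] using
    (φ.sum_range_measure_preimage_singleton (μ.restrict F)).symm

theorem setIntegral_eq_sum [CompleteSpace E] {φ : SimpleFunc X E} (hφ : Integrable φ μ)
    (F : Set X) :
    ∫ x in F, φ x ∂μ = ∑ c ∈ φ.range, μ.real (φ ⁻¹' {c} ∩ F) • c := by
  rw [φ.integral_eq_sum hφ.integrableOn]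
  simp [measureReal_def, Measure.restrict_apply (φ.measurableSet_preimage _)]

theorem measure_eq_mul_of_measure_preimage_inter_eq (φ : SimpleFunc X β) {F S : Set X} {t : ℝ≥0∞}
    (h : ∀ c, μ (φ ⁻¹' {c} ∩ F) = t * μ (φ ⁻¹' {c} ∩ S)) : μ F = t * μ S := by
  simp_rw [φ.measure_eq_sum_measure_preimage_inter F, φ.measure_eq_sum_measure_preimage_inter S,
    Finset.mul_sum, h]

theorem setIntegral_eq_smul_of_measure_preimage_inter_eq [CompleteSpace E] {φ : SimpleFunc X E}
    (hφ : Integrable φ μ) {F S : Set X} {δ : ℝ} (hδ : 0 ≤ δ)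
    (h : ∀ c, μ (φ ⁻¹' {c} ∩ F) = ENNReal.ofReal δ * μ (φ ⁻¹' {c} ∩ S)) :
    ∫ x in F, φ x ∂μ = δ • ∫ x in S, φ x ∂μ := by
  simp_rw [setIntegral_eq_sum hφ, Finset.smul_sum, smul_smul, measureReal_def, h,
    ENNReal.toReal_mul, ENNReal.toReal_ofReal hδ]

end MeasureTheory.SimpleFunc

theorem MeasureAtomless.exists_subset_measure_preimage_inter_eq {X β : Type*} [MeasurableSpace X]
    {μ : Measure X} (hμ : MeasureAtomless μ) (φ : SimpleFunc X β) {S : Set X} (hS : MeasurableSet S)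
    (hS_top : μ S ≠ ∞) {t : ℝ≥0∞} (ht : t ≤ 1) :
    ∃ F ⊆ S, MeasurableSet F ∧ ∀ c, μ (φ ⁻¹' {c} ∩ F) = t * μ (φ ⁻¹' {c} ∩ S) := by
  choose A hA_sub hA hμA using fun c => hμ.exists_subset_measure_eq
    ((φ.measurableSet_preimage {c}).inter hS)
    (ne_top_of_le_ne_top hS_top (measure_mono Set.inter_subset_right))
    (mul_le_of_le_one_left' ht)
  have h_piece : ∀ c, φ ⁻¹' {c} ∩ {x | x ∈ A (φ x)} = A c := by
    intro c
    ext x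
    constructor
    · rintro ⟨rfl, hx⟩
      exact hx
    · intro hx
      have hφx : φ x = c := (hA_sub c hx).1
      exact ⟨hφx, show x ∈ A (φ x) by rwa [hφx]⟩
  refine ⟨{x | x ∈ A (φ x)}, fun x hx => (hA_sub _ hx).2, φ.measurableSet_cut _ hA,
    fun c => by rw [h_piece, hμA]⟩

theorem MeasureTheory.Integrable.exists_simpleFunc_integral_norm_sub_lt {X E : Type*}
    [MeasurableSpace X] {μ : Measure X} [NormedAddCommGroup E] {h : X → E}
    (hh : Integrable h μ) {ε : ℝ} (hε : 0 < ε) :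
    ∃ φ : SimpleFunc X E, Integrable φ μ ∧ ∫ x, ‖h x - φ x‖ ∂μ < ε := by
  obtain ⟨φ, hφ_lt, hφ⟩ := (memLp_one_iff_integrable.mpr hh).exists_simpleFunc_eLpNorm_sub_lt
    ENNReal.one_ne_top (ENNReal.ofReal_pos.mpr hε).ne'
  have hφ_int : Integrable φ μ := memLp_one_iff_integrable.mp hφ
  refine ⟨φ, hφ_int, ?_⟩
  have h_meas := (hh.sub hφ_int).aestronglyMeasurable
  calc ∫ x, ‖h x - φ x‖ ∂μ = (eLpNorm (h - ⇑φ) 1 μ).toReal := by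
        rw [toReal_eLpNorm h_meas, lpNorm_one_eq_integral_norm h_meas]
        rfl
    _ < ε := ENNReal.toReal_lt_of_lt_ofReal hφ_lt

theorem MeasureAtomless.exists_subset_measure_eq_norm_setIntegral_sub_lt {X E : Type*}
    [MeasurableSpace X] {μ : Measure X} [IsFiniteMeasure μ] (hμ : MeasureAtomless μ)
    [NormedAddCommGroup E] [NormedSpace ℝ E] [CompleteSpace E] {h : X → E} (hh : Integrable h μ)
    {S : Set X} (hS : MeasurableSet S) {δ : ℝ} (hδ0 : 0 ≤ δ) (hδ1 : δ ≤ 1) {ε : ℝ} (hε : 0 < ε) :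
    ∃ F ⊆ S, MeasurableSet F ∧ μ F = ENNReal.ofReal δ * μ S ∧
      ‖∫ x in F, h x ∂μ - δ • ∫ x in S, h x ∂μ‖ < ε := by
  obtain ⟨φ, hφ, hφ_close⟩ := hh.exists_simpleFunc_integral_norm_sub_lt (half_pos hε)
  obtain ⟨F, hFS, hF, hF_pieces⟩ := hμ.exists_subset_measure_preimage_inter_eq φ hS
    (measure_ne_top μ S) (ENNReal.ofReal_le_one.mpr hδ1)
  refine ⟨F, hFS, hF, φ.measure_eq_mul_of_measure_preimage_inter_eq hF_pieces, ?_⟩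
  have hφ_exact := SimpleFunc.setIntegral_eq_smul_of_measure_preimage_inter_eq hφ hδ0 hF_pieces
  have h_err : ∀ T, ‖∫ x in T, (h x - φ x) ∂μ‖ ≤ ∫ x, ‖h x - φ x‖ ∂μ := fun T =>
    (norm_integral_le_integral_norm _).trans
      (setIntegral_le_integral (hh.sub hφ).norm (Eventually.of_forall fun _ => norm_nonneg _))
  calc ‖∫ x in F, h x ∂μ - δ • ∫ x in S, h x ∂μ‖
      = ‖∫ x in F, (h x - φ x) ∂μ - δ • ∫ x in S, (h x - φ x) ∂μ‖ := by
        rw [integral_sub hh.integrableOn hφ.integrableOn,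
          integral_sub hh.integrableOn hφ.integrableOn, smul_sub, hφ_exact]
        abel_nf
    _ ≤ ‖∫ x in F, (h x - φ x) ∂μ‖ + δ * ‖∫ x in S, (h x - φ x) ∂μ‖ :=
        (norm_sub_le _ _).trans_eq (by rw [norm_smul, Real.norm_of_nonneg hδ0])
    _ ≤ ∫ x, ‖h x - φ x‖ ∂μ + 1 * ∫ x, ‖h x - φ x‖ ∂μ :=
        add_le_add (h_err F) (mul_le_mul hδ1 (h_err S) (norm_nonneg _) zero_le_one)
    _ < ε := by linarith

theorem exists_exact_fraction_approx_integrals_general {X : Type*} [MeasurableSpace X]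
    (μ : Measure X) [IsFiniteMeasure μ] (hμ : MeasureAtomless μ)
    {E : Type*} [NormedAddCommGroup E] [NormedSpace ℝ E] [CompleteSpace E]
    (f g : X → E) (hf : Integrable f μ) (hg : Integrable g μ)
    {S : Set X} (hS : MeasurableSet S)
    {δ : ℝ} (hδ : δ ∈ Set.Ioo (0 : ℝ) 1) :
    ∃ Fn : ℕ → Set X, (∀ n, MeasurableSet (Fn n) ∧ Fn n ⊆ S ∧
        (μ (Fn n)).toReal = δ * (μ S).toReal) ∧
      Tendsto (fun n => ∫ x in Fn n, (f x - g x) ∂μ) atTop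
        (𝓝 (δ • ∫ x in S, (f x - g x) ∂μ)) := by
  obtain ⟨hδ0, hδ1⟩ := hδ
  choose Fn hFS hF hμF h_close using fun n : ℕ =>
    hμ.exists_subset_measure_eq_norm_setIntegral_sub_lt (hf.sub hg) hS hδ0.le hδ1.le
      (Nat.one_div_pos_of_nat (n := n))
  refine ⟨Fn, fun n => ⟨hF n, hFS n, ?_⟩, ?_⟩
  · rw [hμF n, ENNReal.toReal_mul, ENNReal.toReal_ofReal hδ0.le]
  · rw [tendsto_iff_norm_sub_tendsto_zero]
    exact squeeze_zero (fun n => norm_nonneg _) (fun n => (h_close n).le)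
      tendsto_one_div_add_atTop_nhds_zero_nat

/-- There is a sequence `Fₙ ⊆ S` of exact measure `δ·μ S` with
`∫_{Fₙ} (f − g) → δ • ∫_S (f − g)` in norm. -/
theorem exists_exact_fraction_approx_integrals {X : Type*} [MeasurableSpace X]
    (μ : Measure X) [IsFiniteMeasure μ] (hμ : MeasureAtomless μ)
    {E : Type*} [NormedAddCommGroup E] [NormedSpace ℝ E] [CompleteSpace E]
    (f g : X → E) (hf : Integrable f μ) (hg : Integrable g μ)
    {S : Set X} (hS : MeasurableSet S) (hSpos : 0 < μ S)
    {δ : ℝ} (hδ : δ ∈ Set.Ioo (0 : ℝ) 1) :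
    ∃ Fn : ℕ → Set X, (∀ n, MeasurableSet (Fn n) ∧ Fn n ⊆ S ∧
        (μ (Fn n)).toReal = δ * (μ S).toReal) ∧
      Tendsto (fun n => ∫ x in Fn n, (f x - g x) ∂μ) atTop
        (𝓝 (δ • ∫ x in S, (f x - g x) ∂μ)) :=
  exists_exact_fraction_approx_integrals_general μ hμ f g hf hg hS hδ
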